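/- Let G be the group with presentation ⟨a₁, a₂, y | a₁a₂a₁ = a₂a₁a₂, y·a₁·y⁻¹ = a₁⁻¹, y·a₂·y⁻¹ = a₂⁻¹, y² = 1, (a₁a₂)⁶ = 1⟩. Then the subgroup H generated by a₁ and a₂ has index 2 in G, and H is isomorphic to the group ⟨a, b | aba = bab, (ab)⁶ = 1⟩. -/

import Mathlib

/-- Relations of the Birman–Chillingworth presentation of `M(N₃)`:
generators `a₁ = 0`, `a₂ = 1`, `y = 2`, relations `a₁a₂a₁ = a₂a₁a₂`,
`y a₁ y⁻¹ = a₁⁻¹`, `y a₂ y⁻¹ = a₂⁻¹`, `y² = 1`, `(a₁a₂)⁶ = 1`. -/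
def mcgN3Rels : Set (FreeGroup (Fin 3)) :=
  { FreeGroup.of 0 * FreeGroup.of 1 * FreeGroup.of 0 *
      (FreeGroup.of 1 * FreeGroup.of 0 * FreeGroup.of 1)⁻¹,
    FreeGroup.of 2 * FreeGroup.of 0 * (FreeGroup.of 2)⁻¹ * FreeGroup.of 0,
    FreeGroup.of 2 * FreeGroup.of 1 * (FreeGroup.of 2)⁻¹ * FreeGroup.of 1,
    (FreeGroup.of 2) ^ 2,
    (FreeGroup.of 0 * FreeGroup.of 1) ^ 6 }

/-- Relations of `⟨a, b | aba = bab, (ab)⁶ = 1⟩`. -/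
def twistRels3' : Set (FreeGroup (Fin 2)) :=
  { FreeGroup.of 0 * FreeGroup.of 1 * FreeGroup.of 0 *
      (FreeGroup.of 1 * FreeGroup.of 0 * FreeGroup.of 1)⁻¹,
    (FreeGroup.of 0 * FreeGroup.of 1) ^ 6 }

/-!
The generator `y` acts on the twist subgroup by inverting both `a₁` and `a₂`, and inverting both
generators of `T = ⟨a, b | aba = bab, (ab)⁶ = 1⟩` respects its relations: `a⁻¹b⁻¹a⁻¹ = (aba)⁻¹`,
and `(a⁻¹b⁻¹)⁶ = ((ba)⁶)⁻¹` with `ba` conjugate to `ab`. This involution defines a semidirect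
product `T ⋊ C₂`, and the universal properties of the two presentations give mutually inverse
homomorphisms `G ≅ T ⋊ C₂` with `aᵢ ↦ aᵢ` and `y ↦` the generator of `C₂`. Under this isomorphism
`⟨a₁, a₂⟩` goes to the normal factor `T`, which has index `|C₂| = 2`.
-/

namespace MonoidHom

variable {M : Type*} [Group M] {n : ℕ}

def mzmodLift (n : ℕ) (x : M) (hx : x ^ n = 1) : Multiplicative (ZMod n) →* M :=
  AddMonoidHom.toMultiplicativeLeft
    (ZMod.lift n ⟨zmultiplesHom (Additive M) (Additive.ofMul x), by simp [← ofMul_pow, hx]⟩)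

@[simp]
theorem mzmodLift_ofAdd_one (x : M) (hx : x ^ n = 1) :
    mzmodLift n x hx (Multiplicative.ofAdd 1) = x := by
  have h := ZMod.lift_coe n ⟨zmultiplesHom (Additive M) (Additive.ofMul x),
    by simp [← ofMul_pow, hx]⟩ 1
  rw [Int.cast_one] at h
  simpa [mzmodLift] using congrArg Additive.toMul h

theorem ext_mzmod {f g : Multiplicative (ZMod n) →* M}
    (h : f (Multiplicative.ofAdd 1) = g (Multiplicative.ofAdd 1)) : f = g := by
  refine MonoidHom.ext fun x => ?_
  obtain ⟨k, hk⟩ := ZMod.intCast_surjective (Multiplicative.toAdd x)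
  have hx : x = Multiplicative.ofAdd 1 ^ k := by
    rw [← ofAdd_zsmul, zsmul_one, hk, ofAdd_toAdd]
  rw [hx, map_zpow, map_zpow, h]

end MonoidHom

namespace SemidirectProduct

theorem index_range_inl {N H : Type*} [Group N] [Group H] {φ : H →* MulAut N} :
    (inl : N →* N ⋊[φ] H).range.index = Nat.card H := by
  rw [range_inl_eq_ker_rightHom, Subgroup.index_ker,
    MonoidHom.range_eq_top.mpr rightHom_surjective, Subgroup.card_top]

end SemidirectProduct

local notation "𝓜" => PresentedGroup mcgN3Rels
local notation "𝓣" => PresentedGroup twistRels3'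

open PresentedGroup SemidirectProduct

theorem twist_braid : (of 0 : 𝓣) * of 1 * of 0 = of 1 * of 0 * of 1 :=
  mk_eq_mk_of_mul_inv_mem (Set.mem_insert _ _)

theorem twist_pow_six : ((of 0 : 𝓣) * of 1) ^ 6 = 1 :=
  one_of_mem (by simp [twistRels3'])

theorem mcg_braid : (of 0 : 𝓜) * of 1 * of 0 = of 1 * of 0 * of 1 :=
  mk_eq_mk_of_mul_inv_mem (Set.mem_insert _ _)

theorem mcg_conj_zero : (of 2 : 𝓜) * of 0 * (of 2)⁻¹ = (of 0)⁻¹ :=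
  eq_inv_of_mul_eq_one_left (one_of_mem (by simp [mcgN3Rels]))

theorem mcg_conj_one : (of 2 : 𝓜) * of 1 * (of 2)⁻¹ = (of 1)⁻¹ :=
  eq_inv_of_mul_eq_one_left (one_of_mem (by simp [mcgN3Rels]))

theorem mcg_sq_two : (of 2 : 𝓜) ^ 2 = 1 :=
  one_of_mem (by simp [mcgN3Rels])

theorem mcg_pow_six : ((of 0 : 𝓜) * of 1) ^ 6 = 1 :=
  one_of_mem (by simp [mcgN3Rels])

section TwistLift

variable {M : Type*} [Group M] (a b : M) (hbraid : a * b * a = b * a * b)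
  (hsix : (a * b) ^ 6 = 1)

def twistLift : 𝓣 →* M :=
  toGroup (f := ![a, b]) (by rintro r (rfl | rfl) <;> simp [hbraid, hsix])

@[simp]
theorem twistLift_of_zero : twistLift a b hbraid hsix (of 0) = a :=
  toGroup.of _

@[simp]
theorem twistLift_of_one : twistLift a b hbraid hsix (of 1) = b :=
  toGroup.of _

end TwistLift

section McgLift

variable {M : Type*} [Group M] (a₁ a₂ y : M) (hbraid : a₁ * a₂ * a₁ = a₂ * a₁ * a₂)
  (hconj₁ : y * a₁ * y⁻¹ = a₁⁻¹) (hconj₂ : y * a₂ * y⁻¹ = a₂⁻¹) (hy : y ^ 2 = 1)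
  (hsix : (a₁ * a₂) ^ 6 = 1)

def mcgLift : 𝓜 →* M :=
  toGroup (f := ![a₁, a₂, y]) (by
    rintro r (rfl | rfl | rfl | rfl | rfl) <;> simp [hbraid, hy, hsix, hconj₁, hconj₂])

@[simp]
theorem mcgLift_of_zero : mcgLift a₁ a₂ y hbraid hconj₁ hconj₂ hy hsix (of 0) = a₁ :=
  toGroup.of _

@[simp]
theorem mcgLift_of_one : mcgLift a₁ a₂ y hbraid hconj₁ hconj₂ hy hsix (of 1) = a₂ :=
  toGroup.of _

@[simp]
theorem mcgLift_of_two : mcgLift a₁ a₂ y hbraid hconj₁ hconj₂ hy hsix (of 2) = y :=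
  toGroup.of _

end McgLift

def twistInv : 𝓣 →* 𝓣 :=
  twistLift (of 0)⁻¹ (of 1)⁻¹
    (by
      rw [← mul_inv_rev, ← mul_inv_rev, ← mul_inv_rev, ← mul_inv_rev, ← mul_assoc,
        ← mul_assoc, twist_braid])
    (by
      have hba := (SemiconjBy.pow_right (mul_assoc (of 0 : 𝓣) (of 1) (of 0)).symm 6)
      rw [twist_pow_six, SemiconjBy, one_mul, mul_eq_left] at hba
      rw [← mul_inv_rev, inv_pow, hba, inv_one])

theorem twistInv_comp_twistInv : twistInv.comp twistInv = MonoidHom.id 𝓣 :=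
  PresentedGroup.ext fun i => by fin_cases i <;> simp [twistInv]

def twistInvAut : MulAut 𝓣 :=
  twistInv.toMulEquiv twistInv twistInv_comp_twistInv twistInv_comp_twistInv

@[simp]
theorem twistInvAut_of (i : Fin 2) : twistInvAut (of i) = (of i)⁻¹ := by
  fin_cases i <;> simp [twistInvAut, twistInv]

theorem twistInvAut_sq : twistInvAut ^ 2 = 1 :=
  MulEquiv.ext fun t => DFunLike.congr_fun twistInv_comp_twistInv t

def twistAction : Multiplicative (ZMod 2) →* MulAut 𝓣 :=
  MonoidHom.mzmodLift 2 twistInvAut twistInvAut_sq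

@[simp]
theorem twistAction_ofAdd_one : twistAction (Multiplicative.ofAdd 1) = twistInvAut :=
  MonoidHom.mzmodLift_ofAdd_one _ _

local notation "𝓢" => 𝓣 ⋊[twistAction] Multiplicative (ZMod 2)

def toSemidirect : 𝓜 →* 𝓢 :=
  mcgLift (inl (of 0)) (inl (of 1)) (inr (Multiplicative.ofAdd 1))
    (by simp only [← map_mul, twist_braid])
    (by rw [← map_inv, ← inl_aut, twistAction_ofAdd_one, twistInvAut_of, map_inv])
    (by rw [← map_inv, ← inl_aut, twistAction_ofAdd_one, twistInvAut_of, map_inv])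
    (by rw [← map_pow]; exact map_one inr)
    (by simp only [← map_mul, ← map_pow, twist_pow_six, map_one])

def ofSemidirect : 𝓢 →* 𝓜 :=
  SemidirectProduct.lift (twistLift (of 0) (of 1) mcg_braid mcg_pow_six)
    (MonoidHom.mzmodLift 2 (of 2) mcg_sq_two) (by
      have hcases : ∀ g : Multiplicative (ZMod 2), g = 1 ∨ g = Multiplicative.ofAdd 1 := by
        decide
      intro g
      rcases hcases g with rfl | rfl
      · ext t
        simp
      · refine PresentedGroup.ext fun i => ?_
        fin_cases i <;> simp [mcg_conj_zero, mcg_conj_one])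

def mcgEquivSemidirect : 𝓜 ≃* 𝓢 :=
  toSemidirect.toMulEquiv ofSemidirect
    (PresentedGroup.ext fun i => by fin_cases i <;> simp [toSemidirect, ofSemidirect])
    (SemidirectProduct.hom_ext
      (PresentedGroup.ext fun i => by fin_cases i <;> simp [toSemidirect, ofSemidirect])
      (MonoidHom.ext_mzmod (by simp [toSemidirect, ofSemidirect])))

theorem map_mcgEquivSemidirect_closure :
    (Subgroup.closure {(of 0 : 𝓜), of 1}).map (mcgEquivSemidirect : 𝓜 →* 𝓢) =
      (inl : 𝓣 →* 𝓢).range := by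
  rw [MonoidHom.map_closure, MonoidHom.range_eq_map, ← closure_range_of, MonoidHom.map_closure,
    ← Set.range_comp]
  congr 1
  ext x
  simp [Fin.exists_fin_two, eq_comm, mcgEquivSemidirect, toSemidirect]

/-- In `G = M(N₃)` with the Birman–Chillingworth presentation, the subgroup
generated by `a₁, a₂` has index 2 and is isomorphic to
`⟨a, b | aba = bab, (ab)⁶ = 1⟩`. -/
theorem stmt4 :
    (Subgroup.closure {PresentedGroup.of (rels := mcgN3Rels) 0,
        PresentedGroup.of (rels := mcgN3Rels) 1}).index = 2 ∧
      Nonempty ((Subgroup.closure {PresentedGroup.of (rels := mcgN3Rels) 0,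
          PresentedGroup.of (rels := mcgN3Rels) 1}) ≃*
        PresentedGroup twistRels3') := by
  have hmap := map_mcgEquivSemidirect_closure
  refine ⟨?_, ⟨(mcgEquivSemidirect.subgroupMap _).trans
    ((MulEquiv.subgroupCongr hmap).trans (MonoidHom.ofInjective inl_injective).symm)⟩⟩
  rw [← Subgroup.index_map_equiv _ mcgEquivSemidirect, hmap, index_range_inl,
    Nat.card_congr Multiplicative.toAdd, Nat.card_zmod]
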